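/- For positive integers n, p with 0 ≤ p ≤ n, Σ_{k=1}^{n} B(n,p,k)·y^k = n·y·(1+y)^p · Σ_{j≥0} ((p+1)_j·(p-n+1)_j / ((2)_j · j!))·(-y)^j as polynomials in y, where B(n,p,k) = (n/k)·Σ_{r≥0} C(p,r)·C(n-p,r)·C(n-r-1,k-r-1) and (a)_j denotes the rising factorial. -/

import Mathlib

/-! Write `n = p + q`. The coefficients of the derivative of `P = Σ_k B(n,p,k) X^k` are the
`k · B(n,p,k)`, so `P' = n Σ_r C(p,r) C(q,r) (1+X)^(n-1-r) X^r`. Multiplying by `1 + X` and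
using Vandermonde's identity turns this into `n (1+X)^p Σ_k C(p+k,k) C(q,k) X^k`, which by
Pascal's rule is `1 + X` times the derivative of `n X (1+X)^p F`, where for `q ≥ 1` the
hypergeometric series is the polynomial `F(X) = Σ_j C(p+j,j) C(q-1,j) X^j / (j+1)`. Both
polynomials vanish at `0`, so they agree. For `q = 0` the series does not terminate: then
`P = (1+X)^n - 1`, and the series is summed with the negative binomial series
`Σ_j C(j+n-1,n-1) x^j = (1-x)^(-n)`. -/

open Finset

/-- Binomial coefficient `C(a,b)` for integers, with `C(a,b) = 0` unless `0 ≤ b ≤ a`. -/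
def C (a b : ℤ) : ℚ := if 0 ≤ b ∧ b ≤ a then (Nat.choose a.toNat b.toNat : ℚ) else 0

/-- `B(n,p,k) = (n/k) · Σ_{r≥0} C(p,r)·C(n-p,r)·C(n-r-1,k-r-1)`. -/
def B (n p k : ℕ) : ℚ :=
  ((n : ℚ) / k) * ∑ r ∈ range (n + 1),
    C p r * C ((n : ℤ) - p) r * C ((n : ℤ) - r - 1) ((k : ℤ) - r - 1)

/-- Rising factorial `(a)_j = a(a+1)⋯(a+j-1)`. -/
def asc (a : ℝ) (j : ℕ) : ℝ := ∏ t ∈ range j, (a + t)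

open Polynomial hiding C

lemma C_natCast (a b : ℕ) : C a b = a.choose b := by
  by_cases h : b ≤ a
  · simp [C, h]
  · simp [C, Nat.choose_eq_zero_of_lt (not_le.mp h), show ¬ (b : ℤ) ≤ a by omega]

lemma C_of_neg {a b : ℤ} (h : b < 0) : C a b = 0 := by
  simp [C, not_le.mpr h]

lemma C_natCast_sub_natCast (a i r : ℕ) :
    C a ((i : ℤ) - r) = if r ≤ i then (a.choose (i - r) : ℚ) else 0 := by
  split_ifs with h
  · rw [← C_natCast, Nat.cast_sub h]
  · exact C_of_neg (by omega)

lemma choose_mul_C_sub (q r i : ℕ) :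
    (q.choose r : ℚ) * C (q - r : ℕ) ((i : ℤ) - r) = q.choose i * i.choose r := by
  rw [C_natCast_sub_natCast]
  split_ifs with hri
  · exact_mod_cast (Nat.choose_mul hri).symm
  · simp [Nat.choose_eq_zero_of_lt (not_le.mp hri)]

lemma sum_choose_mul_choose (p i : ℕ) :
    ∑ r ∈ range (p + 1), p.choose r * i.choose r = (p + i).choose i := by
  rw [← Nat.choose_symm_add, Nat.add_choose_eq, ← Nat.sum_antidiagonal_swap]
  simp only [Prod.fst_swap, Prod.snd_swap]
  rw [Nat.sum_antidiagonal_eq_sum_range_succ (fun a b => p.choose b * i.choose a)]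
  refine sum_congr rfl fun r hr => ?_
  rw [Nat.choose_symm (Nat.lt_succ_iff.mp (mem_range.mp hr))]

lemma B_eq_zero_of_lt {n p k : ℕ} (h : n < k) : B n p k = 0 := by
  refine mul_eq_zero_of_right _ (sum_eq_zero fun r _ => ?_)
  simp [C, show ¬ (k : ℤ) - r - 1 ≤ n - r - 1 by omega]

lemma C_zero_right {a : ℤ} (ha : 0 ≤ a) : C a 0 = 1 := by
  simp [C, ha]

lemma B_self {n k : ℕ} (hn : 1 ≤ n) (hk : 1 ≤ k) : B n n k = n.choose k := by
  rw [B, sum_eq_single 0 (fun r _ hr => by simp [C, hr]) (by simp)]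
  rw [show (n : ℤ) - (0 : ℕ) - 1 = (n - 1 : ℕ) by omega,
    show (k : ℤ) - (0 : ℕ) - 1 = (k - 1 : ℕ) by omega]
  simp only [sub_self, Nat.cast_zero, C_zero_right le_rfl, C_zero_right (Nat.cast_nonneg _),
    C_natCast, one_mul]
  have h := Nat.add_one_mul_choose_eq (n - 1) (k - 1)
  rw [Nat.sub_add_cancel hn, Nat.sub_add_cancel hk] at h
  rw [div_mul_eq_mul_div, div_eq_iff (by positivity)]
  exact_mod_cast h

lemma coeff_sum_C_mul_X_pow {R : Type*} [Semiring R] {a : ℕ → R} {N : ℕ}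
    (ha : ∀ i, N ≤ i → a i = 0) (i : ℕ) :
    (∑ k ∈ range N, Polynomial.C (a k) * X ^ k).coeff i = a i := by
  simp only [finsetSum_coeff, coeff_C_mul_X_pow, sum_ite_eq, mem_range]
  split_ifs with h
  · rfl
  · exact (ha i (not_lt.mp h)).symm

lemma coeff_X_add_one_pow_mul_X_pow (a r i : ℕ) :
    ((X + 1) ^ a * X ^ r : ℚ[X]).coeff i = C a ((i : ℤ) - r) := by
  rw [coeff_mul_X_pow', C_natCast_sub_natCast]
  split_ifs <;> simp [coeff_X_add_one_pow]

lemma eq_of_derivative_eq {R : Type*} [CommRing R] [IsDomain R] [CharZero R] {f g : R[X]}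
    (h : derivative f = derivative g) (h0 : f.coeff 0 = g.coeff 0) : f = g := by
  ext (_ | i)
  · exact h0
  · have := congrArg (coeff · i) h
    simp only [coeff_derivative] at this
    exact mul_right_cancel₀ (by norm_cast) this

noncomputable def bPoly (n p : ℕ) : ℚ[X] := ∑ k ∈ Icc 1 n, Polynomial.C (B n p k) * X ^ k

noncomputable def hypergeomPoly (p m : ℕ) : ℚ[X] :=
  ∑ j ∈ range (m + 1), Polynomial.C (((p + j).choose j * m.choose j : ℚ) / (j + 1)) * X ^ j

lemma coeff_bPoly (n p k : ℕ) : (bPoly n p).coeff k = B n p k := by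
  simp only [bPoly, finsetSum_coeff, coeff_C_mul_X_pow, sum_ite_eq, mem_Icc]
  split_ifs with h
  · rfl
  · rcases Nat.eq_zero_or_pos k with rfl | hk
    · simp [B] -- `B n p 0 = 0` because `n / 0 = 0` in `ℚ`
    · exact (B_eq_zero_of_lt (by omega)).symm

lemma coeff_hypergeomPoly (p m j : ℕ) :
    (hypergeomPoly p m).coeff j = (p + j).choose j * m.choose j / (j + 1) :=
  coeff_sum_C_mul_X_pow (a := fun j => ((p + j).choose j * m.choose j : ℚ) / (j + 1))
    (fun i hi => by simp [Nat.choose_eq_zero_of_lt (show m < i by omega)]) j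

lemma derivative_bPoly (p m : ℕ) :
    derivative (bPoly (p + m + 1) p) = Polynomial.C ((p + m + 1 : ℕ) : ℚ) *
      ∑ r ∈ range (p + 1), Polynomial.C ((p.choose r * (m + 1).choose r : ℕ) : ℚ) *
        ((X + 1) ^ (p + m - r) * X ^ r) := by
  ext i
  simp only [coeff_derivative, coeff_bPoly, coeff_C_mul, finsetSum_coeff,
    coeff_X_add_one_pow_mul_X_pow]
  rw [B, ← sum_subset (range_subset_range.mpr (by omega : p + 1 ≤ p + m + 1 + 1))]
  · rw [mul_right_comm, ← Nat.cast_add_one i, div_mul_cancel₀ _ (by positivity)]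
    refine congrArg _ (sum_congr rfl fun r hr => ?_)
    have hr : r ≤ p := Nat.lt_succ_iff.mp (mem_range.mp hr)
    rw [show ((p + m + 1 : ℕ) : ℤ) - p = ((m + 1 : ℕ) : ℤ) by push_cast; ring,
      show ((p + m + 1 : ℕ) : ℤ) - r - 1 = ((p + m - r : ℕ) : ℤ) by omega,
      show ((i + 1 : ℕ) : ℤ) - r - 1 = (i : ℤ) - r by push_cast; ring, C_natCast, C_natCast]
    push_cast
    ring
  · intro r _ hr
    rw [C_natCast, Nat.choose_eq_zero_of_lt (by simpa using hr)]
    simp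

lemma sum_choose_mul_X_add_one_pow (p q : ℕ) :
    ∑ r ∈ range (p + 1), Polynomial.C ((p.choose r * q.choose r : ℕ) : ℚ) *
        ((X + 1) ^ (q - r) * X ^ r) =
      ∑ k ∈ range (q + 1),
        Polynomial.C (((p + k).choose k * q.choose k : ℕ) : ℚ) * X ^ k := by
  ext i
  rw [coeff_sum_C_mul_X_pow
    (fun i hi => by simp [Nat.choose_eq_zero_of_lt (show q < i by omega)])]
  simp only [finsetSum_coeff, coeff_C_mul, coeff_X_add_one_pow_mul_X_pow, Nat.cast_mul, mul_assoc,
    choose_mul_C_sub]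
  simp_rw [mul_left_comm _ ((q.choose i : ℕ) : ℚ), ← mul_sum]
  rw [mul_comm]
  exact_mod_cast congrArg (· * q.choose i) (sum_choose_mul_choose p i)

lemma sum_choose_mul_choose_eq_derivative_hypergeomPoly (p m : ℕ) :
    ∑ k ∈ range (m + 2),
        Polynomial.C (((p + k).choose k * (m + 1).choose k : ℕ) : ℚ) * X ^ k =
      (X + 1) * derivative (X * hypergeomPoly p m) +
        Polynomial.C (p : ℚ) * X * hypergeomPoly p m := by
  ext (_ | t)
  · simp [coeff_derivative, coeff_hypergeomPoly]
  · rw [coeff_sum_C_mul_X_pow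
      (fun i hi => by simp [Nat.choose_eq_zero_of_lt (show m + 1 < i by omega)])]
    simp only [add_mul, one_mul, mul_assoc, coeff_add, coeff_X_mul, coeff_C_mul, coeff_derivative,
      coeff_hypergeomPoly]
    have hp : ((p + t + 1 : ℕ) : ℚ) * (p + t).choose t =
        (p + t + 1).choose (t + 1) * (t + 1) := by
      exact_mod_cast Nat.add_one_mul_choose_eq (p + t) t
    rw [← add_assoc, Nat.choose_succ_succ' m t]
    push_cast at hp ⊢
    field_simp
    linear_combination (-(m.choose t : ℚ)) * hp

lemma X_add_one_mul_derivative (p : ℕ) (F : ℚ[X]) :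
    (X + 1) * derivative (X * ((X + 1) ^ p * F)) =
      (X + 1) ^ p * ((X + 1) * derivative (X * F) + Polynomial.C (p : ℚ) * X * F) := by
  rw [show X * ((X + 1) ^ p * F) = (X + 1) ^ p * (X * F) by ring, derivative_mul, derivative_pow]
  rcases p with _ | p
  · simp
  · simp only [Nat.cast_add, Nat.cast_one, map_add, map_natCast, map_one, add_tsub_cancel_right,
      derivative_X, derivative_one, add_zero, mul_one, derivative_mul, one_mul]
    ring

theorem bPoly_eq_mul_hypergeomPoly (p m : ℕ) :
    bPoly (p + m + 1) p =
      Polynomial.C ((p + m + 1 : ℕ) : ℚ) * (X * ((X + 1) ^ p * hypergeomPoly p m)) := by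
  apply eq_of_derivative_eq
  · apply mul_left_cancel₀ (by simpa using X_add_C_ne_zero (1 : ℚ) : (X + 1 : ℚ[X]) ≠ 0)
    rw [derivative_bPoly, derivative_C_mul, mul_left_comm, mul_left_comm (X + 1) (Polynomial.C _),
      X_add_one_mul_derivative, ← sum_choose_mul_choose_eq_derivative_hypergeomPoly,
      ← sum_choose_mul_X_add_one_pow]
    congr 1
    rw [mul_sum, mul_sum]
    refine sum_congr rfl fun r hr => ?_
    by_cases hrm : r ≤ m + 1
    · have hpow : (X + 1 : ℚ[X]) ^ p * (X + 1) ^ (m + 1 - r) =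
          (X + 1) * (X + 1) ^ (p + m - r) := by
        rw [← pow_add, ← pow_succ', show p + (m + 1 - r) = p + m - r + 1 by grind]
      linear_combination
        (-Polynomial.C ((p.choose r * (m + 1).choose r : ℕ) : ℚ) * X ^ r) * hpow
    · simp [Nat.choose_eq_zero_of_lt (not_le.mp hrm)]
  · simp [coeff_bPoly, B]

lemma bPoly_self {n : ℕ} (hn : 1 ≤ n) : bPoly n n = (X + 1) ^ n - 1 := by
  ext (_ | k)
  · simp [coeff_bPoly, coeff_X_add_one_pow, B]
  · simp [coeff_bPoly, coeff_X_add_one_pow, coeff_one, B_self hn (Nat.succ_pos k)]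

lemma aeval_bPoly (n p : ℕ) (y : ℝ) :
    aeval y (bPoly n p) = ∑ k ∈ Icc 1 n, (B n p k : ℝ) * y ^ k := by
  simp [bPoly]

lemma asc_eq_eval_ascPochhammer (a : ℝ) (j : ℕ) : asc a j = (ascPochhammer ℝ j).eval a := by
  induction j with
  | zero => simp [asc]
  | succ j ih => rw [asc, prod_range_succ, ← asc, ih, ascPochhammer_succ_eval]

lemma asc_natCast (a j : ℕ) : asc a j = a.ascFactorial j := by
  rw [asc_eq_eval_ascPochhammer, ascPochhammer_nat_eq_natCast_ascFactorial]

lemma asc_one (j : ℕ) : asc 1 j = j.factorial := by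
  simpa using asc_natCast 1 j

lemma asc_neg_natCast (m j : ℕ) : asc (-m) j = (-1) ^ j * (j.factorial * m.choose j) := by
  rw [asc_eq_eval_ascPochhammer, ascPochhammer_eval_neg_eq_descPochhammer,
    descPochhammer_eval_eq_descFactorial, Nat.descFactorial_eq_factorial_mul_choose]
  push_cast
  ring

lemma asc_natCast_add_one_div_asc_two (p j : ℕ) :
    asc (p + 1) j / asc 2 j = (p + j).choose j / (j + 1) := by
  rw [show (p : ℝ) + 1 = (p + 1 : ℕ) by push_cast; ring,
    show (2 : ℝ) = (1 + 1 : ℕ) by norm_num,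
    asc_natCast, asc_natCast, Nat.ascFactorial_eq_factorial_mul_choose,
    Nat.ascFactorial_eq_factorial_mul_choose, add_comm 1 j, Nat.choose_succ_self_right]
  have : (j.factorial : ℝ) ≠ 0 := by positivity
  push_cast
  field_simp

lemma tsum_asc_eq_aeval_hypergeomPoly (p m : ℕ) (y : ℝ) :
    ∑' j : ℕ, asc ((p : ℝ) + 1) j * asc (-(m : ℝ)) j / (asc 2 j * j.factorial) * (-y) ^ j =
      aeval y (hypergeomPoly p m) := by
  have hterm (j : ℕ) :
      asc ((p : ℝ) + 1) j * asc (-(m : ℝ)) j / (asc 2 j * j.factorial) * (-y) ^ j =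
        (p + j).choose j * m.choose j / (j + 1) * y ^ j := by
    have hsign : ((-1 : ℝ) ^ j) * (-1) ^ j = 1 := by rw [← mul_pow]; norm_num
    have : (j.factorial : ℝ) ≠ 0 := by positivity
    rw [asc_neg_natCast, mul_div_mul_comm, asc_natCast_add_one_div_asc_two, neg_pow]
    field_simp
    linear_combination ((p + j).choose j * m.choose j * y ^ j : ℝ) * hsign
  simp_rw [hterm]
  rw [tsum_eq_sum (s := range (m + 1))
    (fun j hj => by simp [Nat.choose_eq_zero_of_lt (show m < j by simpa using hj)])]
  simp [hypergeomPoly]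

lemma hasSum_choose_div_mul_pow {n : ℕ} (hn : 1 ≤ n) {x : ℝ} (hx : |x| < 1) :
    HasSum (fun j : ℕ => n * x * ((n + j).choose j / (j + 1) * x ^ j))
      (((1 - x) ^ n)⁻¹ - 1) := by
  obtain ⟨k, rfl⟩ : ∃ k, n = k + 1 := ⟨n - 1, by omega⟩
  have h := (hasSum_nat_add_iff' 1).mpr
    (hasSum_choose_mul_geometric_of_norm_lt_one k (r := x) (by simpa using hx))
  rw [show ((1 - x) ^ (k + 1))⁻¹ - 1 =
      1 / (1 - x) ^ (k + 1) - ∑ i ∈ range 1, ((i + k).choose k : ℝ) * x ^ i by simp]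
  refine h.congr_fun fun j => ?_
  have hsymm : Nat.choose (j + 1 + k) k = Nat.choose (k + 1 + j) (j + 1) := by
    rw [show k + 1 + j = j + 1 + k by ring]
    exact Nat.choose_symm_of_eq_add (add_comm _ _)
  have hstep : ((k + 1 + j).choose (j + 1) * (j + 1) : ℝ) = (k + 1 + j).choose j * (k + 1) := by
    have := Nat.choose_succ_right_eq (k + 1 + j) j
    rw [Nat.add_sub_cancel] at this
    exact_mod_cast this
  rw [hsymm]
  field_simp
  push_cast
  linear_combination (-x ^ (j + 1)) * hstep

lemma mul_tsum_choose_div_mul_pow {n : ℕ} (hn : 1 ≤ n) {y : ℝ} (hy : |y| < 1) :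
    n * y * (1 + y) ^ n * ∑' j : ℕ, (n + j).choose j / (j + 1) * (-y) ^ j =
      (1 + y) ^ n - 1 := by
  have h := (hasSum_choose_div_mul_pow hn (x := -y) (by rwa [abs_neg])).tsum_eq
  rw [tsum_mul_left, sub_neg_eq_add] at h
  have : (1 + y) ^ n ≠ 0 := pow_ne_zero _ (by linarith [(abs_lt.mp hy).1])
  rw [show ∀ T : ℝ, n * y * (1 + y) ^ n * T = (1 + y) ^ n * -(n * -y * T) by intro T; ring, h,
    neg_sub, mul_sub, mul_inv_cancel₀ this, mul_one]

theorem stmt_13 (n p : ℕ) (hn : 1 ≤ n) (hp : p ≤ n) (y : ℝ) (hy : |y| < 1) :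
    ∑ k ∈ Icc 1 n, (B n p k : ℝ) * y ^ k =
      (n : ℝ) * y * (1 + y) ^ p *
        ∑' j : ℕ, asc ((p : ℝ) + 1) j * asc ((p : ℝ) - n + 1) j /
          (asc 2 j * Nat.factorial j) * (-y) ^ j := by
  rw [← aeval_bPoly]
  rcases hp.lt_or_eq with hpn | rfl
  · obtain ⟨m, rfl⟩ : ∃ m, n = p + m + 1 := ⟨n - p - 1, by omega⟩
    rw [bPoly_eq_mul_hypergeomPoly, show (p : ℝ) - (p + m + 1 : ℕ) + 1 = -m by push_cast; ring,
      tsum_asc_eq_aeval_hypergeomPoly]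
    simp only [Nat.cast_add, Nat.cast_one, map_add, map_natCast, map_one, map_mul, aeval_X, map_pow]
    ring
  · have hterm (j : ℕ) : asc ((p : ℝ) + 1) j * asc 1 j / (asc 2 j * j.factorial) * (-y) ^ j =
        (p + j).choose j / (j + 1) * (-y) ^ j := by
      rw [asc_one, mul_div_mul_right _ _ (by positivity), asc_natCast_add_one_div_asc_two]
    simp_rw [sub_self, zero_add, hterm]
    rw [mul_tsum_choose_div_mul_pow hn hy, bPoly_self hn]
    simp [add_comm]
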